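/- Let α be a real number with 0 < α < 1 and fix λ₂ ∈ (0,1). Define, for λ₁ ∈ (0,1), I(λ₁, λ₂) = ∫_0^1 ( ∫_0^x x^{−α}(1−x)^{−α}(1−λ₁x)^{−α} · y^{α−1}(1−y)^{α−1}(1−λ₂y)^{α−1} dy ) dx. Then the function λ₁ ↦ I(λ₁, λ₂) is real-analytic on the interval (0,1). -/

import Mathlib

open Real

/-!
Integrating out `y` first gives `I(λ₁, λ₂) = ∫₀¹ (1 - λ₁ x)^(-α) c(x) dx`, where
`c(x) = x^(-α) (1 - x)^(-α) ∫₀ˣ y^(α-1) (1 - y)^(α-1) (1 - λ₂ y)^(α-1) dy` is integrable on `[0, 1]`: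
a Beta weight times a continuous primitive. The kernel `(1 - z x)^(-α)` is holomorphic in `z` on
`Re z < 1`, jointly continuous with its derivative in `(z, x)`, so on compact sets it is dominated by a
constant and one may differentiate under the integral sign. The complexified integral is therefore
holomorphic on `Re z < 1`, and its restriction to real `λ₁ < 1` is real-analytic.
-/

/-- The double integral
`I(λ₁, λ₂) = ∫₀¹ (∫₀ˣ x^(−α)(1−x)^(−α)(1−λ₁x)^(−α) · y^(α−1)(1−y)^(α−1)(1−λ₂y)^(α−1) dy) dx`. -/
noncomputable def Idbl (α l₁ l₂ : ℝ) : ℝ :=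
  ∫ x in (0 : ℝ)..1, ∫ y in (0 : ℝ)..x,
    x ^ (-α) * (1 - x) ^ (-α) * (1 - l₁ * x) ^ (-α) *
      (y ^ (α - 1) * (1 - y) ^ (α - 1) * (1 - l₂ * y) ^ (α - 1))

open MeasureTheory Set Metric Filter

theorem differentiableOn_intervalIntegral_mul_of_hasDerivAt {U : Set ℂ} (hU : IsOpen U)
    {k k' : ℂ → ℝ → ℂ} {c : ℝ → ℂ} {a b : ℝ} (hc : IntervalIntegrable c volume a b)
    (hk : ContinuousOn (Function.uncurry k) (U ×ˢ uIcc a b))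
    (hk' : ContinuousOn (Function.uncurry k') (U ×ˢ uIcc a b))
    (hderiv : ∀ z ∈ U, ∀ x ∈ uIcc a b, HasDerivAt (k · x) (k' z x) z) :
    DifferentiableOn ℂ (fun z => ∫ x in a..b, k z x * c x) U := by
  have slice : ∀ {f : ℂ → ℝ → ℂ}, ContinuousOn (Function.uncurry f) (U ×ˢ uIcc a b) →
      ∀ z ∈ U, IntervalIntegrable (fun x => f z x * c x) volume a b := fun hf z hz =>
    hc.continuousOn_mul (hf.comp (continuousOn_const.prodMk continuousOn_id) fun x hx => ⟨hz, hx⟩)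
  intro z₀ hz₀
  obtain ⟨ε, hε, hball⟩ := nhds_basis_closedBall.mem_iff.1 (hU.mem_nhds hz₀)
  obtain ⟨M, hM⟩ := ((isCompact_closedBall z₀ ε).prod isCompact_uIcc).exists_bound_of_continuousOn
    (hk'.mono (prod_mono hball subset_rfl))
  refine (intervalIntegral.hasDerivAt_integral_of_dominated_loc_of_deriv_le
    (F' := fun z x => k' z x * c x) (bound := fun x => M * ‖c x‖) (ball_mem_nhds z₀ hε) ?_
    (slice hk z₀ hz₀) (slice hk' z₀ hz₀).aestronglyMeasurable_restrict_uIoc ?_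
    (hc.norm.const_mul M) ?_).2.differentiableAt.differentiableWithinAt
  · filter_upwards [hU.mem_nhds hz₀] with z hz
    exact (slice hk z hz).aestronglyMeasurable_restrict_uIoc
  · refine ae_of_all _ fun x hx z hz => ?_
    rw [norm_mul]
    gcongr
    exact hM (z, x) ⟨ball_subset_closedBall hz, uIoc_subset_uIcc hx⟩
  · exact ae_of_all _ fun x hx z hz =>
      (hderiv z (hball (ball_subset_closedBall hz)) x (uIoc_subset_uIcc hx)).mul_const _

theorem one_sub_mul_pos {t x : ℝ} (ht : t < 1) (hx : x ∈ Icc (0 : ℝ) 1) : 0 < 1 - t * x := by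
  rcases le_or_gt t 0 with h | h <;> nlinarith [hx.1, hx.2]

theorem one_sub_mul_ofReal_mem_slitPlane {z : ℂ} (hz : z.re < 1) {x : ℝ} (hx : x ∈ Icc (0 : ℝ) 1) :
    1 - z * x ∈ Complex.slitPlane := by
  refine Complex.mem_slitPlane_iff.2 (Or.inl ?_)
  simpa only [Complex.sub_re, Complex.one_re, Complex.re_mul_ofReal] using one_sub_mul_pos hz hx

theorem differentiableOn_integral_one_sub_mul_cpow_mul (s : ℂ) {c : ℝ → ℂ}
    (hc : IntervalIntegrable c volume 0 1) :
    DifferentiableOn ℂ (fun z : ℂ => ∫ x in (0 : ℝ)..1, (1 - z * x) ^ s * c x) {z | z.re < 1} := by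
  have hslit : ∀ p ∈ {z : ℂ | z.re < 1} ×ˢ uIcc (0 : ℝ) 1, 1 - p.1 * p.2 ∈ Complex.slitPlane :=
    fun p hp => one_sub_mul_ofReal_mem_slitPlane hp.1 (uIcc_of_le (zero_le_one' ℝ) ▸ hp.2)
  refine differentiableOn_intervalIntegral_mul_of_hasDerivAt
    (k' := fun z x => s * (1 - z * x) ^ (s - 1) * -x)
    (isOpen_lt Complex.continuous_re continuous_const) hc ?_ ?_ fun z hz x hx => ?_
  · exact ContinuousOn.cpow_const (by fun_prop) hslit
  · exact (continuousOn_const.mul (ContinuousOn.cpow_const (by fun_prop) hslit)).mul (by fun_prop)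
  · simpa using (((hasDerivAt_id z).mul_const (x : ℂ)).const_sub 1).cpow_const (hslit (z, x) ⟨hz, hx⟩)

theorem analyticOnNhd_integral_one_sub_mul_rpow_mul (r : ℝ) {c : ℝ → ℝ}
    (hc : IntervalIntegrable c volume 0 1) :
    AnalyticOnNhd ℝ (fun t : ℝ => ∫ x in (0 : ℝ)..1, (1 - t * x) ^ r * c x) (Iio 1) := by
  have hΦ := (differentiableOn_integral_one_sub_mul_cpow_mul (r : ℂ) (c := fun x => (c x : ℂ))
    ⟨hc.1.ofReal, hc.2.ofReal⟩).analyticOnNhd (isOpen_lt Complex.continuous_re continuous_const)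
  intro t ht
  have hre := (Complex.reCLM.analyticAt _).comp
    (((hΦ t (by simpa using ht)).restrictScalars (𝕜 := ℝ)).comp (Complex.ofRealCLM.analyticAt t))
  refine hre.congr ?_
  filter_upwards [Iio_mem_nhds ht] with u hu
  have hreal : ∀ x ∈ uIcc (0 : ℝ) 1,
      (1 - (u : ℂ) * x) ^ (r : ℂ) * c x = (((1 - u * x) ^ r * c x : ℝ) : ℂ) := by
    intro x hx
    rw [uIcc_of_le zero_le_one] at hx
    rw [Complex.ofReal_mul, Complex.ofReal_cpow (one_sub_mul_pos hu hx).le]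
    push_cast
    rfl
  simp only [Function.comp_apply, Complex.reCLM_apply]
  rw [intervalIntegral.integral_congr hreal, intervalIntegral.integral_ofReal, Complex.ofReal_re]

theorem intervalIntegrable_rpow_mul_one_sub_rpow_left {p : ℝ} (q : ℝ) (hp : -1 < p) :
    IntervalIntegrable (fun x : ℝ => x ^ p * (1 - x) ^ q) volume 0 (1 / 2) := by
  refine (intervalIntegral.intervalIntegrable_rpow' hp).mul_continuousOn
    (ContinuousOn.rpow_const (by fun_prop) fun x hx => Or.inl ?_)
  rw [uIcc_of_le (by norm_num)] at hx
  exact (show (0 : ℝ) < 1 - x by linarith [hx.2]).ne'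

theorem intervalIntegrable_rpow_mul_one_sub_rpow {p q : ℝ} (hp : -1 < p) (hq : -1 < q) :
    IntervalIntegrable (fun x : ℝ => x ^ p * (1 - x) ^ q) volume 0 1 := by
  refine (intervalIntegrable_rpow_mul_one_sub_rpow_left q hp).trans ?_
  rw [IntervalIntegrable.iff_comp_neg]
  convert ((intervalIntegrable_rpow_mul_one_sub_rpow_left p hq).comp_add_right 1).symm using 1
  · ext1 x
    rw [mul_comm]
    congr 2 <;> ring
  · norm_num
  · norm_num

theorem Idbl_eq_integral_one_sub_mul_rpow_mul (α l₁ l₂ : ℝ) : Idbl α l₁ l₂ =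
    ∫ x in (0 : ℝ)..1, (1 - l₁ * x) ^ (-α) * (x ^ (-α) * (1 - x) ^ (-α) *
      ∫ y in (0 : ℝ)..x, y ^ (α - 1) * (1 - y) ^ (α - 1) * (1 - l₂ * y) ^ (α - 1)) := by
  refine intervalIntegral.integral_congr fun x _ => ?_
  rw [intervalIntegral.integral_const_mul]
  ring

/-- For `0 < α < 1` and fixed `λ₂ ∈ (0,1)`, the function
`λ₁ ↦ I(λ₁, λ₂)` is real-analytic on the open interval `(0,1)`. -/
theorem stmt8 (α : ℝ) (hα0 : 0 < α) (hα1 : α < 1)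
    (l₂ : ℝ) (hl₂ : l₂ ∈ Set.Ioo (0 : ℝ) 1) :
    AnalyticOn ℝ (fun l₁ : ℝ => Idbl α l₁ l₂) (Set.Ioo (0 : ℝ) 1) := by
  have hg : IntervalIntegrable
      (fun y : ℝ => y ^ (α - 1) * (1 - y) ^ (α - 1) * (1 - l₂ * y) ^ (α - 1)) volume 0 1 := by
    refine (intervalIntegrable_rpow_mul_one_sub_rpow (by linarith) (by linarith)).mul_continuousOn
      (ContinuousOn.rpow_const (by fun_prop) fun y hy => Or.inl ?_)
    exact (one_sub_mul_pos hl₂.2 (uIcc_of_le (zero_le_one' ℝ) ▸ hy)).ne'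
  have hc := (intervalIntegrable_rpow_mul_one_sub_rpow (p := -α) (q := -α) (by linarith)
    (by linarith)).mul_continuousOn (intervalIntegral.continuousOn_primitive_interval' hg left_mem_uIcc)
  simp_rw [Idbl_eq_integral_one_sub_mul_rpow_mul]
  exact ((analyticOnNhd_integral_one_sub_mul_rpow_mul (-α) hc).mono Ioo_subset_Iio_self).analyticOn
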